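/- SDP rank reduction with two constraints: if the complex semidefinite program maximize tr(CW) subject to tr(A₁W) ≥ b₁ (or ≤ b₁), tr(A₂W) ≤ b₂, W ⪰ 0 over Hermitian M×M matrices W has an optimal solution, then it has an optimal solution W* with rank(W*) ≤ 1, provided the optimal value is finite and b₂ > 0 with A₂ = I (so the feasible set is bounded). -/

import Mathlib

/-!
Write `W = ∑ vᵢ vᵢᴴ`. It suffices to find one vector `y` with `yᴴ B y = ∑ vᵢᴴ B vᵢ` for
`B ∈ {1, A₁, C}`, since `y yᴴ` is then a rank-one feasible point with the same objective value.
Merging the `vᵢ` two at a time, this is the Toeplitz–Hausdorff convexity of the joint numerical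
range of two Hermitian matrices. After subtracting multiples of the identity it asks for a nonzero
common null vector of two Hermitian forms `G₁, G₂` whose values `p` at `u` and `-p` at `w` cancel.
Rotating `w` by a phase makes the form `p₂ G₁ - p₁ G₂` vanish on the real segment from `u` to `w`,
and the intermediate value theorem finds a point of that segment where `p₁ G₁ + p₂ G₂` vanishes.
-/

open scoped ComplexOrder
open Matrix

namespace Matrix

variable {n : Type*} [Fintype n]

def reForm (B : Matrix n n ℂ) (x y : n → ℂ) : ℝ := (star x ⬝ᵥ B *ᵥ y).re

lemma IsHermitian.reForm_comm {B : Matrix n n ℂ} (hB : B.IsHermitian) (x y : n → ℂ) :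
    reForm B y x = reForm B x y := by
  rw [reForm, reForm, ← Complex.conj_re, ← Complex.star_def, star_dotProduct, star_star,
    star_mulVec, hB.eq, dotProduct_mulVec]

lemma reForm_smul_add_smul {B : Matrix n n ℂ} (hB : B.IsHermitian) (s t : ℝ) (u w : n → ℂ) :
    reForm B ((s : ℂ) • u + (t : ℂ) • w) ((s : ℂ) • u + (t : ℂ) • w) =
      s ^ 2 * reForm B u u + 2 * s * t * reForm B u w + t ^ 2 * reForm B w w := by
  have hwu := hB.reForm_comm u w
  simp only [reForm] at hwu ⊢
  simp only [star_add, star_smul, mulVec_add, mulVec_smul, add_dotProduct, dotProduct_add,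
    smul_dotProduct, dotProduct_smul, Complex.star_def, Complex.conj_ofReal, smul_eq_mul,
    Complex.add_re, Complex.re_ofReal_mul, hwu]
  ring

lemma reForm_smul_smul (B : Matrix n n ℂ) (c : ℂ) (x : n → ℂ) :
    reForm B (c • x) (c • x) = Complex.normSq c * reForm B x x := by
  simp only [reForm, star_smul, mulVec_smul, smul_dotProduct, dotProduct_smul, smul_eq_mul,
    Complex.star_def, ← mul_assoc, Complex.mul_conj, Complex.re_ofReal_mul]

lemma reForm_smul_right (B : Matrix n n ℂ) (c : ℂ) (x y : n → ℂ) :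
    reForm B x (c • y) = (c * (star x ⬝ᵥ B *ᵥ y)).re := by
  rw [reForm, mulVec_smul, dotProduct_smul, smul_eq_mul]

lemma reForm_sub (B B' : Matrix n n ℂ) (x y : n → ℂ) :
    reForm (B - B') x y = reForm B x y - reForm B' x y := by
  simp only [reForm, sub_mulVec, dotProduct_sub, Complex.sub_re]

lemma reForm_smul (a : ℝ) (B : Matrix n n ℂ) (x y : n → ℂ) :
    reForm (a • B) x y = a * reForm B x y := by
  simp only [reForm, smul_mulVec, dotProduct_smul, Complex.real_smul, Complex.re_ofReal_mul]

lemma reForm_zero_left (B : Matrix n n ℂ) (y : n → ℂ) : reForm B 0 y = 0 := by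
  simp [reForm]

lemma reForm_eq_of_add_eq_zero (B : Matrix n n ℂ) {x y : n → ℂ} (h : x + y = 0) :
    reForm B x x = reForm B y y := by
  simp [reForm, eq_neg_of_add_eq_zero_left h, mulVec_neg]

lemma reForm_one_self_nonneg [DecidableEq n] (x : n → ℂ) : 0 ≤ reForm 1 x x := by
  rw [reForm, one_mulVec]
  exact (Complex.nonneg_iff.mp (dotProduct_star_self_nonneg x)).1

lemma reForm_one_self_pos [DecidableEq n] {x : n → ℂ} (hx : x ≠ 0) : 0 < reForm 1 x x := by
  rw [reForm, one_mulVec]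
  exact (Complex.pos_iff.mp (dotProduct_star_self_pos_iff.mpr hx)).1

lemma exists_normSq_eq_one_re_mul_eq_zero (z : ℂ) :
    ∃ μ : ℂ, Complex.normSq μ = 1 ∧ (μ * z).re = 0 := by
  rcases eq_or_ne z 0 with rfl | hz
  · exact ⟨1, by simp, by simp⟩
  · refine ⟨Complex.I * star z / ‖z‖, ?_, ?_⟩
    · simp [Complex.normSq_eq_norm_sq, hz]
    · rw [div_mul_eq_mul_div, mul_assoc, Complex.star_def, ← Complex.normSq_eq_conj_mul_self]
      simp [Complex.div_re]

lemma ofReal_smul_add_ofReal_smul_ne_zero {G₁ G₂ : Matrix n n ℂ} {u w : n → ℂ}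
    (hw₁ : reForm G₁ w w = -reForm G₁ u u) (hw₂ : reForm G₂ w w = -reForm G₂ u u)
    (hu : reForm G₁ u u ^ 2 + reForm G₂ u u ^ 2 ≠ 0) (t : ℝ) :
    ((1 - t : ℝ) : ℂ) • u + (t : ℂ) • w ≠ 0 := by
  intro h0
  have e₁ := reForm_eq_of_add_eq_zero G₁ h0
  have e₂ := reForm_eq_of_add_eq_zero G₂ h0
  simp only [reForm_smul_smul, Complex.normSq_ofReal, hw₁, hw₂] at e₁ e₂
  have hpos : (1 - t) ^ 2 + t ^ 2 ≠ 0 := by nlinarith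
  have h₁ : ((1 - t) ^ 2 + t ^ 2) * reForm G₁ u u = 0 := by linear_combination e₁
  have h₂ : ((1 - t) ^ 2 + t ^ 2) * reForm G₂ u u = 0 := by linear_combination e₂
  rw [(mul_eq_zero.mp h₁).resolve_left hpos, (mul_eq_zero.mp h₂).resolve_left hpos] at hu
  norm_num at hu

theorem exists_ne_zero_reForm_eq_zero {G₁ G₂ : Matrix n n ℂ} (h₁ : G₁.IsHermitian)
    (h₂ : G₂.IsHermitian) (u w : n → ℂ) (hu : u ≠ 0) (hw₁ : reForm G₁ w w = -reForm G₁ u u)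
    (hw₂ : reForm G₂ w w = -reForm G₂ u u) :
    ∃ y ≠ 0, reForm G₁ y y = 0 ∧ reForm G₂ y y = 0 := by
  set p₁ := reForm G₁ u u
  set p₂ := reForm G₂ u u
  rcases eq_or_ne (p₁ ^ 2 + p₂ ^ 2) 0 with hp | hp
  · exact ⟨u, hu, by nlinarith, by nlinarith⟩
  obtain ⟨μ, hμ, hμz⟩ := exists_normSq_eq_one_re_mul_eq_zero
    (p₂ * (star u ⬝ᵥ G₁ *ᵥ w) - p₁ * (star u ⬝ᵥ G₂ *ᵥ w))
  set w' := μ • w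
  have hw'₁ : reForm G₁ w' w' = -p₁ := by rw [reForm_smul_smul, hμ, one_mul, hw₁]
  have hw'₂ : reForm G₂ w' w' = -p₂ := by rw [reForm_smul_smul, hμ, one_mul, hw₂]
  have hr : p₂ * reForm G₁ u w' - p₁ * reForm G₂ u w' = 0 := by
    simpa only [w', reForm_smul_right, mul_sub, Complex.sub_re, mul_left_comm μ,
      Complex.re_ofReal_mul] using hμz
  set y : ℝ → n → ℂ := fun t => ((1 - t : ℝ) : ℂ) • u + (t : ℂ) • w'
  have hy {G : Matrix n n ℂ} (hG : G.IsHermitian) (hw : reForm G w' w' = -reForm G u u) (t : ℝ) :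
      reForm G (y t) (y t) = (1 - 2 * t) * reForm G u u + 2 * (1 - t) * t * reForm G u w' := by
    simp only [y, reForm_smul_add_smul hG, hw]; ring
  have hP : 0 < p₁ ^ 2 + p₂ ^ 2 := lt_of_le_of_ne (by positivity) hp.symm
  set f : ℝ → ℝ := fun t => p₁ * reForm G₁ (y t) (y t) + p₂ * reForm G₂ (y t) (y t)
  have hf : ContinuousOn f (Set.Icc 0 1) := by
    simp only [f, hy h₁ hw'₁, hy h₂ hw'₂]; fun_prop
  obtain ⟨t, -, hft⟩ : (0 : ℝ) ∈ f '' Set.Icc 0 1 := by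
    refine intermediate_value_Icc' zero_le_one hf ⟨?_, ?_⟩ <;>
      simp only [f, hy h₁ hw'₁, hy h₂ hw'₂] <;> nlinarith
  have hX : p₂ * reForm G₁ (y t) (y t) - p₁ * reForm G₂ (y t) (y t) = 0 := by
    linear_combination 2 * (1 - t) * t * hr + p₂ * hy h₁ hw'₁ t - p₁ * hy h₂ hw'₂ t
  refine ⟨y t, ofReal_smul_add_ofReal_smul_ne_zero hw'₁ hw'₂ hp t, ?_, ?_⟩
  · refine (mul_eq_zero.mp (?_ : (p₁ ^ 2 + p₂ ^ 2) * reForm G₁ (y t) (y t) = 0)).resolve_left hp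
    linear_combination p₁ * hft + p₂ * hX
  · refine (mul_eq_zero.mp (?_ : (p₁ ^ 2 + p₂ ^ 2) * reForm G₂ (y t) (y t) = 0)).resolve_left hp
    linear_combination p₂ * hft - p₁ * hX

theorem exists_reForm_eq_add [DecidableEq n] {A C : Matrix n n ℂ} (hA : A.IsHermitian)
    (hC : C.IsHermitian) (u w : n → ℂ) :
    ∃ y, ∀ B ∈ ({1, A, C} : Set (Matrix n n ℂ)), reForm B y y = reForm B u u + reForm B w w := by
  rcases eq_or_ne u 0 with rfl | hu
  · exact ⟨w, fun B _ ↦ by rw [reForm_zero_left, zero_add]⟩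
  set N := reForm 1 u u + reForm 1 w w
  set a := reForm A u u + reForm A w w
  set c := reForm C u u + reForm C w w
  have hN : 0 < N := add_pos_of_pos_of_nonneg (reForm_one_self_pos hu) (reForm_one_self_nonneg w)
  obtain ⟨y, hy, hyA, hyC⟩ := exists_ne_zero_reForm_eq_zero
    ((hA.smul (.all N)).sub (isHermitian_one.smul (.all a)))
    ((hC.smul (.all N)).sub (isHermitian_one.smul (.all c))) u w hu
    (by simp only [reForm_sub, reForm_smul, N, a]; ring)
    (by simp only [reForm_sub, reForm_smul, N, c]; ring)
  simp only [reForm_sub, reForm_smul] at hyA hyC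
  have hy1 := reForm_one_self_pos hy
  refine ⟨(√(N / reForm 1 y y) : ℂ) • y, ?_⟩
  simp only [reForm_smul_smul, Complex.normSq_ofReal,
    Real.mul_self_sqrt (div_nonneg hN.le hy1.le)]
  rintro B (rfl | rfl | rfl)
  · exact div_mul_cancel₀ N hy1.ne'
  · field_simp; linarith
  · field_simp; linarith

theorem exists_reForm_eq_sum [DecidableEq n] {A C : Matrix n n ℂ} (hA : A.IsHermitian)
    (hC : C.IsHermitian) {ι : Type*} (s : Finset ι) (v : ι → n → ℂ) :
    ∃ y, ∀ B ∈ ({1, A, C} : Set (Matrix n n ℂ)),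
      reForm B y y = ∑ i ∈ s, reForm B (v i) (v i) := by
  classical
  induction s using Finset.induction_on with
  | empty => exact ⟨0, fun B _ ↦ by rw [reForm_zero_left, Finset.sum_empty]⟩
  | insert i s hi ih =>
    obtain ⟨y, hy⟩ := ih
    obtain ⟨z, hz⟩ := exists_reForm_eq_add hA hC (v i) y
    exact ⟨z, fun B hB ↦ by rw [Finset.sum_insert hi, hz B hB, hy B hB]⟩

lemma re_trace_mul_vecMulVec_star (B : Matrix n n ℂ) (y : n → ℂ) :
    ((B * vecMulVec y (star y)).trace).re = reForm B y y := by
  rw [mul_vecMulVec, trace_vecMulVec, dotProduct_comm, reForm]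

theorem PosSemidef.exists_re_trace_mul_vecMulVec_star_eq [DecidableEq n] {A C W : Matrix n n ℂ}
    (hA : A.IsHermitian) (hC : C.IsHermitian) (hW : W.PosSemidef) :
    ∃ y, ∀ B ∈ ({1, A, C} : Set (Matrix n n ℂ)),
      ((B * vecMulVec y (star y)).trace).re = ((B * W).trace).re := by
  obtain ⟨m, v, rfl⟩ := posSemidef_iff_eq_sum_vecMulVec.mp hW
  obtain ⟨y, hy⟩ := exists_reForm_eq_sum hA hC Finset.univ v
  refine ⟨y, fun B hB ↦ ?_⟩
  simp only [re_trace_mul_vecMulVec_star, hy B hB, Matrix.mul_sum, trace_sum, Complex.re_sum]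

end Matrix

theorem sdp_rank_one_solution_general (M : ℕ)
    (C A1 : Matrix (Fin M) (Fin M) ℂ) (hC : C.IsHermitian) (hA1 : A1.IsHermitian)
    (b1 b2 : ℝ)
    (v : ℝ)
    (hopt : IsGreatest {x : ℝ | ∃ W : Matrix (Fin M) (Fin M) ℂ,
        W.PosSemidef ∧ b1 ≤ ((A1 * W).trace).re ∧ (W.trace).re ≤ b2 ∧
        x = ((C * W).trace).re} v) :
    ∃ W : Matrix (Fin M) (Fin M) ℂ,
      W.PosSemidef ∧ b1 ≤ ((A1 * W).trace).re ∧ (W.trace).re ≤ b2 ∧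
      ((C * W).trace).re = v ∧ W.rank ≤ 1 := by
  obtain ⟨W, hW, hW₁, hW₂, rfl⟩ := hopt.1
  obtain ⟨y, hy⟩ := hW.exists_re_trace_mul_vecMulVec_star_eq hA1 hC
  refine ⟨vecMulVec y (star y), posSemidef_vecMulVec_self_star y, ?_, ?_, hy C (by simp),
    rank_vecMulVec_le _ _⟩
  · rwa [hy A1 (by simp)]
  · have h1 := hy 1 (by simp)
    rw [one_mul, one_mul] at h1
    rwa [h1]

/-- SDP rank reduction: a complex SDP with two linear constraints (one of them a trace
bound, making the feasible set bounded) that has an optimal solution also has a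
rank-one optimal solution. -/
theorem sdp_rank_one_solution (M : ℕ) (hM : 1 ≤ M)
    (C A1 : Matrix (Fin M) (Fin M) ℂ) (hC : C.IsHermitian) (hA1 : A1.IsHermitian)
    (b1 b2 : ℝ) (hb2 : 0 < b2)
    (v : ℝ)
    (hopt : IsGreatest {x : ℝ | ∃ W : Matrix (Fin M) (Fin M) ℂ,
        W.PosSemidef ∧ b1 ≤ ((A1 * W).trace).re ∧ (W.trace).re ≤ b2 ∧
        x = ((C * W).trace).re} v) :
    ∃ W : Matrix (Fin M) (Fin M) ℂ,
      W.PosSemidef ∧ b1 ≤ ((A1 * W).trace).re ∧ (W.trace).re ≤ b2 ∧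
      ((C * W).trace).re = v ∧ W.rank ≤ 1 :=
  sdp_rank_one_solution_general M C A1 hC hA1 b1 b2 v hopt
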